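/- Let a ≥ 2 be an even integer, and let G be the Grundy sequence of S({1, a, 2a}). Then: (i) G(n + 3a) = G(n) for all n ∈ ℕ; (ii) for 0 ≤ n < 3a: G(n) = n mod 2 if n < a; G(a) = 2; G(n) = (n − a − 1) mod 2 if a + 1 ≤ n ≤ 2a; G(n) = 2 + (n − 2a − 1) mod 2 if 2a + 1 ≤ n ≤ 3a − 2; and G(3a − 1) = 2; and (iii) for every c ≥ 1, G(n + c) ≠ G(n) holds for all n if and only if c = s + 3am for some m ∈ ℕ and s ∈ {1} ∪ {a, a + 2, a + 4, …, 2a} ∪ {3a − 1}. -/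
import Mathlib

set_option maxHeartbeats 1000000

/-- The minimum excludant: the least natural number not in `X`. -/
noncomputable def mex (X : Set ℕ) : ℕ := sInf {m | m ∉ X}

/-- `G` is the Grundy (nim-value) sequence of the subtraction game with
subtraction set `S`: `G n = mex { G (n - s) : s ∈ S, s ≤ n }`. -/
def IsGrundy (S : Finset ℕ) (G : ℕ → ℕ) : Prop :=
  ∀ n, G n = mex {v | ∃ s ∈ S, s ≤ n ∧ v = G (n - s)}

def f (a r : ℕ) : ℕ :=
  if r < a then r % 2
  else if r = a then 2
  else if r ≤ 2*a then (r - a - 1) % 2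
  else if r ≤ 3*a - 2 then 2 + (r - 2*a - 1) % 2
  else 2

def F (a n : ℕ) : ℕ := f a (n % (3*a))

lemma mex_eq' (X : Set ℕ) (m : ℕ) (h1 : m ∉ X) (h2 : ∀ k < m, k ∈ X) : mex X = m := by
  unfold mex
  have hm : m ∈ {x | x ∉ X} := h1
  refine le_antisymm (Nat.sInf_le hm) ?_
  by_contra h
  push_neg at h
  exact (Nat.sInf_mem (⟨m, hm⟩ : Set.Nonempty {x | x ∉ X})) (h2 _ h)

lemma f_spec (a r : ℕ) (ha : 2 ≤ a) :
    (r < a ∧ f a r = r % 2) ∨ (r = a ∧ f a r = 2) ∨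
    (a < r ∧ r ≤ 2*a ∧ f a r = (r - a - 1) % 2) ∨
    (2*a < r ∧ r ≤ 3*a - 2 ∧ f a r = 2 + (r - 2*a - 1) % 2) ∨
    (3*a - 2 < r ∧ f a r = 2) := by
  unfold f
  split_ifs <;> omega

lemma sub_mod_char (a n s : ℕ) (ha : 2 ≤ a) (hs1 : 1 ≤ s) (hs3 : s ≤ 3*a) (hn : s ≤ n) :
    (s ≤ n % (3*a) ∧ (n - s) % (3*a) = n % (3*a) - s) ∨
    (n % (3*a) < s ∧ (n - s) % (3*a) = n % (3*a) + 3*a - s) := by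
  have h3 : 0 < 3*a := by omega
  have hrlt : n % (3*a) < 3*a := Nat.mod_lt n h3
  have key : ∀ x q, x < 3*a → (x + 3*a*q) % (3*a) = x := fun x q hx => by
    rw [Nat.add_mul_mod_self_left]; exact Nat.mod_eq_of_lt hx
  obtain ⟨q, hq⟩ : ∃ q, n = 3*a*q + n % (3*a) := ⟨n / (3*a), (Nat.div_add_mod n (3*a)).symm⟩
  rcases le_or_gt s (n % (3*a)) with h | h
  · refine Or.inl ⟨h, ?_⟩
    rw [show n - s = (n % (3*a) - s) + 3*a*q by omega]
    exact key _ _ (by omega)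
  · refine Or.inr ⟨h, ?_⟩
    match q, hq with
    | 0, hq => exfalso; simp at hq; omega
    | (q'+1), hq =>
      rw [Nat.mul_succ] at hq
      rw [show n - s = (n % (3*a) + 3*a - s) + 3*a*q' by omega]
      exact key _ _ (by omega)

lemma f_lt (a r : ℕ) (h : r < a) : f a r = r % 2 := by
  unfold f; rw [if_pos h]

lemma f_eqa (a r : ℕ) (ha : 2 ≤ a) (h : r = a) : f a r = 2 := by
  unfold f; split_ifs <;> omega

lemma f_mid (a r : ℕ) (h1 : a < r) (h2 : r ≤ 2*a) : f a r = (r - a - 1) % 2 := by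
  unfold f; split_ifs <;> omega

lemma f_hi (a r : ℕ) (h1 : 2*a < r) (h2 : r ≤ 3*a-2) : f a r = 2 + (r - 2*a - 1) % 2 := by
  unfold f; split_ifs <;> omega

lemma f_top (a r : ℕ) (ha : 2 ≤ a) (h : 3*a-2 < r) : f a r = 2 := by
  unfold f; split_ifs <;> omega

lemma step (a : ℕ) (ha : 2 ≤ a) (hae : a % 2 = 0) (n : ℕ) :
    mex {v : ℕ | (1 ≤ n ∧ v = f a ((n-1) % (3*a))) ∨ (a ≤ n ∧ v = f a ((n-a) % (3*a))) ∨
      (2*a ≤ n ∧ v = f a ((n-2*a) % (3*a)))} = f a (n % (3*a)) := by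
  have h3 : 0 < 3*a := by omega
  have hrlt : n % (3*a) < 3*a := Nat.mod_lt n h3
  have big : ¬ ((1 ≤ n ∧ f a (n % (3*a)) = f a ((n-1) % (3*a))) ∨
        (a ≤ n ∧ f a (n % (3*a)) = f a ((n-a) % (3*a))) ∨
        (2*a ≤ n ∧ f a (n % (3*a)) = f a ((n-2*a) % (3*a)))) ∧
      (∀ k : ℕ, k ≤ 2 → k < f a (n % (3*a)) →
        ((1 ≤ n ∧ k = f a ((n-1) % (3*a))) ∨ (a ≤ n ∧ k = f a ((n-a) % (3*a))) ∨
         (2*a ≤ n ∧ k = f a ((n-2*a) % (3*a))))) ∧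
      f a (n % (3*a)) ≤ 3 := by
    rcases lt_or_ge n (3*a) with hn3 | hn3
    · -- small n : residues are literal
      have e0 : n % (3*a) = n := Nat.mod_eq_of_lt hn3
      rcases (by omega : n = 0 ∨ (1 ≤ n ∧ n < a) ∨ n = a ∨ (a < n ∧ n < 2*a) ∨ n = 2*a ∨
          n = 2*a+1 ∨ (2*a+2 ≤ n ∧ n ≤ 3*a-2) ∨ n = 3*a-1) with h | h | h | h | h | h | h | h
      · have hv0 : f a (n % (3*a)) = 0 := by
          rw [e0, h]; rw [f_lt a 0 (by omega)]
        refine ⟨by omega, by omega, by omega⟩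
      · have e1 : (n-1) % (3*a) = n-1 := Nat.mod_eq_of_lt (by omega)
        have hv0 : f a (n % (3*a)) = n % 2 := by rw [e0]; exact f_lt a n (by omega)
        have hv1 : f a ((n-1) % (3*a)) = (n-1) % 2 := by rw [e1]; exact f_lt a (n-1) (by omega)
        refine ⟨by omega, ?_, by omega⟩
        intro k _ _
        exact Or.inl ⟨by omega, by omega⟩
      · have e1 : (n-1) % (3*a) = n-1 := Nat.mod_eq_of_lt (by omega)
        have e2 : (n-a) % (3*a) = n-a := Nat.mod_eq_of_lt (by omega)
        have hv0 : f a (n % (3*a)) = 2 := by rw [e0]; exact f_eqa a n ha h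
        have hv1 : f a ((n-1) % (3*a)) = (n-1) % 2 := by rw [e1]; exact f_lt a (n-1) (by omega)
        have hv2 : f a ((n-a) % (3*a)) = 0 := by
          rw [e2]; rw [show n - a = 0 by omega]; rw [f_lt a 0 (by omega)]
        refine ⟨by omega, ?_, by omega⟩
        intro k _ _
        rcases (by omega : k = 0 ∨ k = 1) with rfl | rfl
        · exact Or.inr (Or.inl ⟨by omega, by omega⟩)
        · exact Or.inl ⟨by omega, by omega⟩
      · have e1 : (n-1) % (3*a) = n-1 := Nat.mod_eq_of_lt (by omega)
        have e2 : (n-a) % (3*a) = n-a := Nat.mod_eq_of_lt (by omega)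
        have hv0 : f a (n % (3*a)) = (n-a-1) % 2 := by rw [e0]; exact f_mid a n (by omega) (by omega)
        have hv1 := f_spec a ((n-1) % (3*a)) ha
        have hv2 : f a ((n-a) % (3*a)) = (n-a) % 2 := by rw [e2]; exact f_lt a (n-a) (by omega)
        refine ⟨by omega, ?_, by omega⟩
        intro k _ _
        exact Or.inr (Or.inl ⟨by omega, by omega⟩)
      · have e1 : (n-1) % (3*a) = n-1 := Nat.mod_eq_of_lt (by omega)
        have e2 : (n-a) % (3*a) = n-a := Nat.mod_eq_of_lt (by omega)
        have e3 : (n-2*a) % (3*a) = n-2*a := Nat.mod_eq_of_lt (by omega)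
        have hv0 : f a (n % (3*a)) = (a-1) % 2 := by
          rw [e0]; rw [f_mid a n (by omega) (by omega)]; congr 1; omega
        have hv1 : f a ((n-1) % (3*a)) = (a-2) % 2 := by
          rw [e1]; rw [f_mid a (n-1) (by omega) (by omega)]; congr 1; omega
        have hv2 : f a ((n-a) % (3*a)) = 2 := by rw [e2]; exact f_eqa a (n-a) ha (by omega)
        have hv3 : f a ((n-2*a) % (3*a)) = 0 := by
          rw [e3]; rw [show n - 2*a = 0 by omega]; rw [f_lt a 0 (by omega)]
        refine ⟨by omega, ?_, by omega⟩
        intro k _ _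
        exact Or.inr (Or.inr ⟨by omega, by omega⟩)
      · -- n = 2a+1
        have e1 : (n-1) % (3*a) = n-1 := Nat.mod_eq_of_lt (by omega)
        have e2 : (n-a) % (3*a) = n-a := Nat.mod_eq_of_lt (by omega)
        have e3 : (n-2*a) % (3*a) = n-2*a := Nat.mod_eq_of_lt (by omega)
        have hv0 : f a (n % (3*a)) = 2 := by
          rcases (by omega : a = 2 ∨ 2*a+1 ≤ 3*a-2) with h2 | h2
        -- if a = 2 then n = 5 = 3a-1; else hi branch
          · rw [e0]; exact f_top a n ha (by omega)
          · rw [e0]; rw [f_hi a n (by omega) (by omega)]; omega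
        have hv1 : f a ((n-1) % (3*a)) = (a-1) % 2 := by
          rw [e1]; rw [f_mid a (n-1) (by omega) (by omega)]; congr 1; omega
        have hv2 : f a ((n-a) % (3*a)) = 0 := by
          rw [e2]; rw [f_mid a (n-a) (by omega) (by omega)]; omega
        have hv3 : f a ((n-2*a) % (3*a)) = 1 := by
          rw [e3]; rw [show n - 2*a = 1 by omega]; rw [f_lt a 1 (by omega)]
        refine ⟨by omega, ?_, by omega⟩
        intro k _ _
        rcases (by omega : k = 0 ∨ k = 1) with rfl | rfl
        · exact Or.inr (Or.inl ⟨by omega, by omega⟩)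
        · exact Or.inr (Or.inr ⟨by omega, by omega⟩)
      · -- 2a+2 ≤ n ≤ 3a-2
        have e1 : (n-1) % (3*a) = n-1 := Nat.mod_eq_of_lt (by omega)
        have e2 : (n-a) % (3*a) = n-a := Nat.mod_eq_of_lt (by omega)
        have e3 : (n-2*a) % (3*a) = n-2*a := Nat.mod_eq_of_lt (by omega)
        have hv0 : f a (n % (3*a)) = 2 + (n-2*a-1) % 2 := by
          rw [e0]; exact f_hi a n (by omega) (by omega)
        have hv1 := f_spec a ((n-1) % (3*a)) ha
        have hv2 : f a ((n-a) % (3*a)) = (n-2*a-1) % 2 := by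
          rw [e2]; rw [f_mid a (n-a) (by omega) (by omega)]; congr 1; omega
        have hv3 : f a ((n-2*a) % (3*a)) = (n-2*a) % 2 := by
          rw [e3]; exact f_lt a (n-2*a) (by omega)
        refine ⟨by omega, ?_, by omega⟩
        intro k _ _
        rcases (by omega : k = 0 ∨ k = 1 ∨ k = 2) with rfl | rfl | rfl
        · rcases (by omega : (n-2*a-1) % 2 = 0 ∨ (n-2*a) % 2 = 0) with h0 | h0
          · exact Or.inr (Or.inl ⟨by omega, by omega⟩)
          · exact Or.inr (Or.inr ⟨by omega, by omega⟩)
        · rcases (by omega : (n-2*a-1) % 2 = 1 ∨ (n-2*a) % 2 = 1) with h0 | h0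
          · exact Or.inr (Or.inl ⟨by omega, by omega⟩)
          · exact Or.inr (Or.inr ⟨by omega, by omega⟩)
        · exact Or.inl ⟨by omega, by omega⟩
      · -- n = 3a-1
        have e1 : (n-1) % (3*a) = n-1 := Nat.mod_eq_of_lt (by omega)
        have e2 : (n-a) % (3*a) = n-a := Nat.mod_eq_of_lt (by omega)
        have e3 : (n-2*a) % (3*a) = n-2*a := Nat.mod_eq_of_lt (by omega)
        have hv0 : f a (n % (3*a)) = 2 := by rw [e0]; exact f_top a n ha (by omega)
        have hv1 := f_spec a ((n-1) % (3*a)) ha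
        have hv2 : f a ((n-a) % (3*a)) = (a-2) % 2 := by
          rw [e2]; rw [f_mid a (n-a) (by omega) (by omega)]; congr 1; omega
        have hv3 : f a ((n-2*a) % (3*a)) = (a-1) % 2 := by
          rw [e3]; rw [f_lt a (n-2*a) (by omega)]; congr 1; omega
        refine ⟨by omega, ?_, by omega⟩
        intro k _ _
        rcases (by omega : k = 0 ∨ k = 1) with rfl | rfl
        · exact Or.inr (Or.inl ⟨by omega, by omega⟩)
        · exact Or.inr (Or.inr ⟨by omega, by omega⟩)
    · -- n ≥ 3a : all moves available, work with r = n % 3a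
      have c1 := sub_mod_char a n 1 ha (by omega) (by omega) (by omega)
      have c2 := sub_mod_char a n a ha (by omega) (by omega) (by omega)
      have c3 := sub_mod_char a n (2*a) ha (by omega) (by omega) (by omega)
      rcases (by omega : n % (3*a) = 0 ∨ (1 ≤ n % (3*a) ∧ n % (3*a) < a) ∨ n % (3*a) = a ∨
          (a < n % (3*a) ∧ n % (3*a) < 2*a) ∨ n % (3*a) = 2*a ∨
          (2*a < n % (3*a) ∧ n % (3*a) ≤ 3*a-2) ∨ n % (3*a) = 3*a-1)
          with hr | hr | hr | hr | hr | hr | hr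
      · -- r = 0
        have e1 : (n-1) % (3*a) = 3*a-1 := by omega
        have e2 : (n-a) % (3*a) = 2*a := by omega
        have e3 : (n-2*a) % (3*a) = a := by omega
        have hv0 : f a (n % (3*a)) = 0 := by rw [hr]; rw [f_lt a 0 (by omega)]
        have hv1 : f a ((n-1) % (3*a)) = 2 := by rw [e1]; exact f_top a _ ha (by omega)
        have hv2 : f a ((n-a) % (3*a)) = (a-1) % 2 := by
          rw [e2]; rw [f_mid a (2*a) (by omega) (by omega)]; congr 1; omega
        have hv3 : f a ((n-2*a) % (3*a)) = 2 := by rw [e3]; exact f_eqa a a ha rfl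
        exact ⟨by omega, fun k _ hk => absurd hk (by omega), by omega⟩
      · -- 1 ≤ r < a
        have e1 : (n-1) % (3*a) = n % (3*a) - 1 := by omega
        have e2 : (n-a) % (3*a) = n % (3*a) + 2*a := by omega
        have e3 : (n-2*a) % (3*a) = n % (3*a) + a := by omega
        have hv0 : f a (n % (3*a)) = n % (3*a) % 2 := f_lt a _ (by omega)
        have hv1 : f a ((n-1) % (3*a)) = (n % (3*a) - 1) % 2 := by
          rw [e1]; exact f_lt a _ (by omega)
        have hv2 := f_spec a ((n-a) % (3*a)) ha
        have hv3 : f a ((n-2*a) % (3*a)) = (n % (3*a) - 1) % 2 := by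
          rw [e3]; rw [f_mid a _ (by omega) (by omega)]; congr 1; omega
        refine ⟨by omega, ?_, by omega⟩
        intro k _ _
        exact Or.inl ⟨by omega, by omega⟩
      · -- r = a
        have e1 : (n-1) % (3*a) = a-1 := by omega
        have e2 : (n-a) % (3*a) = 0 := by omega
        have e3 : (n-2*a) % (3*a) = 2*a := by omega
        have hv0 : f a (n % (3*a)) = 2 := by rw [hr]; exact f_eqa a a ha rfl
        have hv1 : f a ((n-1) % (3*a)) = (a-1) % 2 := by rw [e1]; exact f_lt a _ (by omega)
        have hv2 : f a ((n-a) % (3*a)) = 0 := by rw [e2]; rw [f_lt a 0 (by omega)]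
        have hv3 : f a ((n-2*a) % (3*a)) = (a-1) % 2 := by
          rw [e3]; rw [f_mid a (2*a) (by omega) (by omega)]; congr 1; omega
        refine ⟨by omega, ?_, by omega⟩
        intro k _ _
        rcases (by omega : k = 0 ∨ k = 1) with rfl | rfl
        · exact Or.inr (Or.inl ⟨by omega, by omega⟩)
        · exact Or.inl ⟨by omega, by omega⟩
      · -- a < r < 2a
        have e1 : (n-1) % (3*a) = n % (3*a) - 1 := by omega
        have e2 : (n-a) % (3*a) = n % (3*a) - a := by omega
        have e3 : (n-2*a) % (3*a) = n % (3*a) + a := by omega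
        have hv0 : f a (n % (3*a)) = (n % (3*a) - a - 1) % 2 :=
          f_mid a _ (by omega) (by omega)
        have hv1 := f_spec a ((n-1) % (3*a)) ha
        have hv2 : f a ((n-a) % (3*a)) = (n % (3*a) - a) % 2 := by
          rw [e2]; exact f_lt a _ (by omega)
        have hv3 := f_spec a ((n-2*a) % (3*a)) ha
        refine ⟨by omega, ?_, by omega⟩
        intro k _ _
        exact Or.inr (Or.inl ⟨by omega, by omega⟩)
      · -- r = 2a
        have e1 : (n-1) % (3*a) = 2*a-1 := by omega
        have e2 : (n-a) % (3*a) = a := by omega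
        have e3 : (n-2*a) % (3*a) = 0 := by omega
        have hv0 : f a (n % (3*a)) = (a-1) % 2 := by
          rw [hr]; rw [f_mid a (2*a) (by omega) (by omega)]; congr 1; omega
        have hv1 : f a ((n-1) % (3*a)) = (a-2) % 2 := by
          rw [e1]; rw [f_mid a (2*a-1) (by omega) (by omega)]; congr 1; omega
        have hv2 : f a ((n-a) % (3*a)) = 2 := by rw [e2]; exact f_eqa a a ha rfl
        have hv3 : f a ((n-2*a) % (3*a)) = 0 := by rw [e3]; rw [f_lt a 0 (by omega)]
        refine ⟨by omega, ?_, by omega⟩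
        intro k _ _
        exact Or.inr (Or.inr ⟨by omega, by omega⟩)
      · -- 2a < r ≤ 3a-2
        have e1 : (n-1) % (3*a) = n % (3*a) - 1 := by omega
        have e2 : (n-a) % (3*a) = n % (3*a) - a := by omega
        have e3 : (n-2*a) % (3*a) = n % (3*a) - 2*a := by omega
        have hv0 : f a (n % (3*a)) = 2 + (n % (3*a) - 2*a - 1) % 2 :=
          f_hi a _ (by omega) (by omega)
        have hv1 := f_spec a ((n-1) % (3*a)) ha
        have hv2 : f a ((n-a) % (3*a)) = (n % (3*a) - 2*a - 1) % 2 := by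
          rw [e2]; rw [f_mid a _ (by omega) (by omega)]; congr 1; omega
        have hv3 : f a ((n-2*a) % (3*a)) = (n % (3*a) - 2*a) % 2 := by
          rw [e3]; exact f_lt a _ (by omega)
        refine ⟨by omega, ?_, by omega⟩
        intro k _ _
        rcases (by omega : k = 0 ∨ k = 1 ∨ k = 2) with rfl | rfl | rfl
        · rcases (by omega : (n % (3*a) - 2*a - 1) % 2 = 0 ∨ (n % (3*a) - 2*a) % 2 = 0)
              with h0 | h0
          · exact Or.inr (Or.inl ⟨by omega, by omega⟩)
          · exact Or.inr (Or.inr ⟨by omega, by omega⟩)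
        · rcases (by omega : (n % (3*a) - 2*a - 1) % 2 = 1 ∨ (n % (3*a) - 2*a) % 2 = 1)
              with h0 | h0
          · exact Or.inr (Or.inl ⟨by omega, by omega⟩)
          · exact Or.inr (Or.inr ⟨by omega, by omega⟩)
        · exact Or.inl ⟨by omega, by omega⟩
      · -- r = 3a-1
        have e1 : (n-1) % (3*a) = 3*a-2 := by omega
        have e2 : (n-a) % (3*a) = 2*a-1 := by omega
        have e3 : (n-2*a) % (3*a) = a-1 := by omega
        have hv0 : f a (n % (3*a)) = 2 := by rw [hr]; exact f_top a _ ha (by omega)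
        have hv1 := f_spec a ((n-1) % (3*a)) ha
        have hv2 : f a ((n-a) % (3*a)) = (a-2) % 2 := by
          rw [e2]; rw [f_mid a (2*a-1) (by omega) (by omega)]; congr 1; omega
        have hv3 : f a ((n-2*a) % (3*a)) = (a-1) % 2 := by
          rw [e3]; rw [f_lt a (a-1) (by omega)]
        refine ⟨by omega, ?_, by omega⟩
        intro k _ _
        rcases (by omega : k = 0 ∨ k = 1) with rfl | rfl
        · exact Or.inr (Or.inl ⟨by omega, by omega⟩)
        · exact Or.inr (Or.inr ⟨by omega, by omega⟩)
  apply mex_eq'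
  · exact fun h => big.1 h
  · intro k hk
    have hb := big.2.2
    exact big.2.1 k (by omega) hk

lemma mod_add_small (r s m : ℕ) (hr : r < m) (hs : s < m) :
    (r + s < m ∧ (r + s) % m = r + s) ∨ (m ≤ r + s ∧ (r + s) % m = r + s - m) := by
  rcases lt_or_ge (r + s) m with h | h
  · exact Or.inl ⟨h, Nat.mod_eq_of_lt h⟩
  · refine Or.inr ⟨h, ?_⟩
    rw [Nat.mod_eq_sub_mod h]
    exact Nat.mod_eq_of_lt (by omega)

lemma safe (a : ℕ) (ha : 2 ≤ a) (hae : a % 2 = 0) (s : ℕ)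
    (hs : s = 1 ∨ (a ≤ s ∧ s ≤ 2*a ∧ (s - a) % 2 = 0) ∨ s = 3*a-1)
    (r : ℕ) (hr : r < 3*a) : f a ((r + s) % (3*a)) ≠ f a r := by
  have hslt : s < 3*a := by omega
  have hchar := mod_add_small r s (3*a) hr hslt
  have h1 := f_spec a ((r + s) % (3*a)) ha
  have h2 := f_spec a r ha
  omega

lemma notsafe (a : ℕ) (ha : 2 ≤ a) (hae : a % 2 = 0) (s : ℕ) (hslt : s < 3*a)
    (h1 : s ≠ 1) (h2 : ¬(a ≤ s ∧ s ≤ 2*a ∧ (s - a) % 2 = 0)) (h3 : s ≠ 3*a-1) :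
    ∃ r, r < 3*a ∧ f a ((r + s) % (3*a)) = f a r := by
  rcases (by omega : s = 0 ∨ (2 ≤ s ∧ s ≤ a-1 ∧ s % 2 = 0) ∨ (3 ≤ s ∧ s ≤ a-1 ∧ s % 2 = 1) ∨
      (a+1 ≤ s ∧ s ≤ 2*a-1 ∧ s % 2 = 1) ∨
      (2*a+1 ≤ s ∧ s ≤ 3*a-2 ∧ (s-2*a) % 2 = 0) ∨
      (2*a+1 ≤ s ∧ s ≤ 3*a-2 ∧ (s-2*a) % 2 = 1)) with h | h | h | h | h | h
  · refine ⟨0, by omega, ?_⟩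
    subst h; norm_num
  · -- s even in [2,a-1], r = 0
    refine ⟨0, by omega, ?_⟩
    have e : (0 + s) % (3*a) = s := by rw [Nat.zero_add]; exact Nat.mod_eq_of_lt (by omega)
    rw [e, f_lt a s (by omega), f_lt a 0 (by omega)]
    omega
  · -- s odd in [3,a-1], r = a+1-s
    refine ⟨a+1-s, by omega, ?_⟩
    have e : (a+1-s + s) % (3*a) = a+1 := by
      rw [show a+1-s+s = a+1 by omega]; exact Nat.mod_eq_of_lt (by omega)
    rw [e, f_mid a (a+1) (by omega) (by omega), f_lt a (a+1-s) (by omega)]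
    omega
  · -- s odd in [a+1,2a-1], r = 0
    refine ⟨0, by omega, ?_⟩
    have e : (0 + s) % (3*a) = s := by rw [Nat.zero_add]; exact Nat.mod_eq_of_lt (by omega)
    rw [e, f_mid a s (by omega) (by omega), f_lt a 0 (by omega)]
    omega
  · -- s = 2a + t, t even in [2,a-2], r = 3a - s
    refine ⟨3*a-s, by omega, ?_⟩
    have e : (3*a-s + s) % (3*a) = 0 := by
      rw [show 3*a-s+s = 3*a by omega]; simp
    rw [e, f_lt a 0 (by omega), f_lt a (3*a-s) (by omega)]
    omega
  · -- s = 2a + t, t odd in [1,a-3], r = a+1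
    refine ⟨a+1, by omega, ?_⟩
    have e : (a+1 + s) % (3*a) = s - 2*a + 1 := by
      rw [show a+1+s = (s - 2*a + 1) + 3*a by omega, Nat.add_mod_right]
      exact Nat.mod_eq_of_lt (by omega)
    rw [e, f_lt a (s-2*a+1) (by omega), f_mid a (a+1) (by omega) (by omega)]
    omega

theorem stmt_7 (a : ℕ) (ha : 2 ≤ a) (haeven : Even a) (G : ℕ → ℕ)
    (hG : IsGrundy {1, a, 2 * a} G) :
    (∀ n, G (n + 3 * a) = G n) ∧
    (∀ n < 3 * a,
      (n < a → G n = n % 2) ∧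
      (n = a → G n = 2) ∧
      (a + 1 ≤ n → n ≤ 2 * a → G n = (n - a - 1) % 2) ∧
      (2 * a + 1 ≤ n → n ≤ 3 * a - 2 → G n = 2 + (n - 2 * a - 1) % 2) ∧
      (n = 3 * a - 1 → G n = 2)) ∧
    (∀ c, 1 ≤ c →
      ((∀ n, G (n + c) ≠ G n) ↔
        ∃ s m : ℕ, c = s + 3 * a * m ∧
          (s = 1 ∨ (∃ i, 2 * i ≤ a ∧ s = a + 2 * i) ∨ s = 3 * a - 1))) := by
  have hae : a % 2 = 0 := by
    obtain ⟨b, hb⟩ := haeven; omega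
  have h3 : 0 < 3*a := by omega
  have key : ∀ n, G n = f a (n % (3*a)) := by
    intro n
    induction n using Nat.strong_induction_on with
    | _ n IH =>
      rw [hG n]
      have hset : {v | ∃ s ∈ ({1, a, 2 * a} : Finset ℕ), s ≤ n ∧ v = G (n - s)} =
          {v : ℕ | (1 ≤ n ∧ v = f a ((n-1) % (3*a))) ∨ (a ≤ n ∧ v = f a ((n-a) % (3*a))) ∨
            (2*a ≤ n ∧ v = f a ((n-2*a) % (3*a)))} := by
        ext v
        simp only [Set.mem_setOf_eq, Finset.mem_insert, Finset.mem_singleton]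
        constructor
        · rintro ⟨s, hs, hsn, rfl⟩
          rcases hs with rfl | hs2 | hs2
          · exact Or.inl ⟨hsn, IH (n-1) (by omega)⟩
          · refine Or.inr (Or.inl ⟨by omega, ?_⟩)
            rw [hs2]; exact IH (n-a) (by omega)
          · refine Or.inr (Or.inr ⟨by omega, ?_⟩)
            rw [hs2]; exact IH (n-2*a) (by omega)
        · rintro (⟨h, rfl⟩ | ⟨h, rfl⟩ | ⟨h, rfl⟩)
          · exact ⟨1, Or.inl rfl, h, (IH (n-1) (by omega)).symm⟩
          · exact ⟨a, Or.inr (Or.inl rfl), h, (IH (n-a) (by omega)).symm⟩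
          · exact ⟨2*a, Or.inr (Or.inr rfl), h, (IH (n-2*a) (by omega)).symm⟩
      rw [hset]
      exact step a ha hae n
  refine ⟨?_, ?_, ?_⟩
  · intro n
    rw [key, key, Nat.add_mod_right]
  · intro n hn
    have e : n % (3*a) = n := Nat.mod_eq_of_lt (by omega)
    refine ⟨?_, ?_, ?_, ?_, ?_⟩
    · intro h; rw [key, e]; exact f_lt a n h
    · intro h; rw [key, e]; exact f_eqa a n ha h
    · intro h1 h2; rw [key, e]; exact f_mid a n (by omega) (by omega)
    · intro h1 h2; rw [key, e]; exact f_hi a n (by omega) (by omega)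
    · intro h; rw [key, e]; exact f_top a n ha (by omega)
  · intro c hc
    constructor
    · intro hsafe
      refine ⟨c % (3*a), c / (3*a), (Nat.mod_add_div c (3*a)).symm, ?_⟩
      by_contra hT
      push_neg at hT
      have h2' : ¬(a ≤ c % (3*a) ∧ c % (3*a) ≤ 2*a ∧ (c % (3*a) - a) % 2 = 0) := by
        rintro ⟨ha1, ha2, ha3⟩
        exact hT.2.1 ((c % (3*a) - a)/2) (by omega) (by omega)
      obtain ⟨r, hr, heq⟩ := notsafe a ha hae (c % (3*a)) (Nat.mod_lt c h3)
        hT.1 h2' hT.2.2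
      apply hsafe r
      rw [key, key, Nat.mod_eq_of_lt hr]
      calc f a ((r + c) % (3*a)) = f a ((r % (3*a) + c % (3*a)) % (3*a)) := by
            rw [← Nat.add_mod]
        _ = f a ((r + c % (3*a)) % (3*a)) := by rw [Nat.mod_eq_of_lt hr]
        _ = f a r := heq
    · rintro ⟨s, m, rfl, hsT⟩ n
      have hs : s = 1 ∨ (a ≤ s ∧ s ≤ 2*a ∧ (s - a) % 2 = 0) ∨ s = 3*a-1 := by
        rcases hsT with h | ⟨i, hi, rfl⟩ | h
        · exact Or.inl h
        · exact Or.inr (Or.inl ⟨by omega, by omega, by omega⟩)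
        · exact Or.inr (Or.inr h)
      rw [key, key]
      have e1 : (n + (s + 3 * a * m)) % (3*a) = (n % (3*a) + s) % (3*a) := by
        rw [show n + (s + 3 * a * m) = (n + s) + 3*a*m by ring]
        rw [Nat.add_mul_mod_self_left, Nat.add_mod,
          Nat.mod_eq_of_lt (show s < 3*a by omega)]
      rw [e1]
      exact safe a ha hae s hs (n % (3*a)) (Nat.mod_lt n h3)
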